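/- For all integers r, s and k, H(s)·G(k+r) + (−1)^{r−1}·H(s−r)·G(k) = F(r)·(G(0)·H(k+s−1) + G(1)·H(k+s)). -/

import Mathlib

/-!
Both sides of the identity, seen as functions of `r` with `s` and `k` fixed, satisfy the
Fibonacci recurrence: for the term `(-1) ^ (r - 1) * H (s - r)` the sign change exactly
compensates the reversed index. A sequence satisfying the recurrence is determined by two
consecutive values, so it suffices to check `r = 0`, where both sides vanish, and `r = 1`. The
case `r = 1` is the addition formula `H s * G (k + 1) + H (s - 1) * G k = G 0 * H (k + s - 1) +
G 1 * H (k + s)`, which by the same argument, now in `k`, reduces to `k = 0` and `k = 1`.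
-/

def IsGibonacci {R : Type*} [Add R] (G : ℤ → R) : Prop :=
  ∀ n, G n = G (n - 1) + G (n - 2)

namespace IsGibonacci

section CommRing

variable {R : Type*} [CommRing R] {G H : ℤ → R}

theorem add_two (hG : IsGibonacci G) (n : ℤ) : G (n + 2) = G (n + 1) + G n := by
  have h := hG (n + 2)
  rwa [show n + 2 - 1 = n + 1 by ring, add_sub_cancel_right] at h

theorem ext (hG : IsGibonacci G) (hH : IsGibonacci H) (h0 : G 0 = H 0) (h1 : G 1 = H 1) :
    G = H := by
  suffices h : ∀ n : ℤ, G n = H n ∧ G (n + 1) = H (n + 1) from funext fun n => (h n).1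
  intro n
  induction n using Int.induction_on with
  | zero => exact ⟨h0, by rwa [zero_add]⟩
  | succ n ih =>
    refine ⟨ih.2, ?_⟩
    rw [add_assoc, one_add_one_eq_two, hG.add_two, hH.add_two, ih.1, ih.2]
  | pred n ih =>
    refine ⟨?_, by rw [sub_add_cancel]; exact ih.1⟩
    have eG := hG.add_two (-n - 1)
    have eH := hH.add_two (-n - 1)
    rw [show -(n : ℤ) - 1 + 2 = -n + 1 by ring, sub_add_cancel] at eG eH
    linear_combination ih.2 - ih.1 - eG + eH

theorem add (hG : IsGibonacci G) (hH : IsGibonacci H) : IsGibonacci fun n => G n + H n :=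
  fun n => by beta_reduce; rw [hG n, hH n]; ring

theorem const_mul (hG : IsGibonacci G) (a : R) : IsGibonacci fun n => a * G n :=
  fun n => by beta_reduce; rw [hG n, mul_add]

theorem mul_const (hG : IsGibonacci G) (a : R) : IsGibonacci fun n => G n * a :=
  fun n => by beta_reduce; rw [hG n, add_mul]

theorem comp_add_const (hG : IsGibonacci G) (c : ℤ) : IsGibonacci fun n => G (n + c) :=
  fun n => by
    beta_reduce
    rw [hG (n + c), add_sub_right_comm, add_sub_right_comm]

theorem comp_const_add (hG : IsGibonacci G) (c : ℤ) : IsGibonacci fun n => G (c + n) :=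
  fun n => by
    beta_reduce
    rw [hG (c + n), add_sub_assoc, add_sub_assoc]

theorem addition_formula (hG : IsGibonacci G) (hH : IsGibonacci H) (s k : ℤ) :
    H s * G (k + 1) + H (s - 1) * G k = G 0 * H (k + s - 1) + G 1 * H (k + s) := by
  suffices h : (fun k => H s * G (k + 1) + H (s - 1) * G k) =
      fun k => G 0 * H (k + s - 1) + G 1 * H (k + s) from congrFun h k
  have hRHS : IsGibonacci fun k => G 0 * H (k + s - 1) + G 1 * H (k + s) := by
    simpa only [add_sub_assoc] using
      ((hH.comp_add_const (s - 1)).const_mul (G 0)).add ((hH.comp_add_const s).const_mul (G 1))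
  refine ext (((hG.comp_add_const 1).const_mul (H s)).add (hG.const_mul (H (s - 1)))) hRHS
    ?_ ?_
  · simp only [zero_add]
    ring
  · have hG2 : G (1 + 1) = G 1 + G 0 := by simpa using hG.add_two 0
    have hH1 : H (1 + s) = H s + H (s - 1) := by
      rw [add_comm, ← sub_add_cancel s 1, add_assoc, one_add_one_eq_two, hH.add_two,
        sub_add_cancel]
    simp only [hG2, hH1, add_sub_cancel_left]
    ring

end CommRing

section Field

variable {R : Type*} [Field R] {F G H : ℤ → R}

theorem neg_one_zpow_mul_comp_sub (hH : IsGibonacci H) (s : ℤ) :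
    IsGibonacci fun r => (-1 : R) ^ (r - 1) * H (s - r) := by
  intro r
  beta_reduce
  have h := hH.add_two (s - r)
  rw [show s - r + 2 = s - (r - 2) by ring, show s - r + 1 = s - (r - 1) by ring] at h
  have hsign₁ : (-1 : R) ^ (r - 1 - 1) = -(-1) ^ (r - 1) := by
    rw [zpow_sub_one₀ (by norm_num)]
    simp
  have hsign₂ : (-1 : R) ^ (r - 2 - 1) = (-1) ^ (r - 1) := by
    rw [show r - 2 - 1 = r - 1 - 1 - 1 by ring, zpow_sub_one₀ (by norm_num), hsign₁]
    simp
  rw [hsign₁, hsign₂]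
  linear_combination -(-1 : R) ^ (r - 1) * h

theorem howard_identity (hF : IsGibonacci F) (hF0 : F 0 = 0) (hF1 : F 1 = 1)
    (hG : IsGibonacci G) (hH : IsGibonacci H) (r s k : ℤ) :
    H s * G (k + r) + (-1 : R) ^ (r - 1) * H (s - r) * G k =
      F r * (G 0 * H (k + s - 1) + G 1 * H (k + s)) := by
  suffices h : (fun r => H s * G (k + r) + (-1 : R) ^ (r - 1) * H (s - r) * G k) =
      fun r => F r * (G 0 * H (k + s - 1) + G 1 * H (k + s)) from congrFun h r
  refine ext (((hG.comp_const_add k).const_mul (H s)).add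
    ((hH.neg_one_zpow_mul_comp_sub s).mul_const (G k))) (hF.mul_const _) ?_ ?_
  · simp [hF0]
  · simpa [hF1] using hG.addition_formula hH s k

end Field

end IsGibonacci

/-- a generalization of Howard's identity to two gibonacci
sequences. -/
theorem statement15 (F : ℤ → ℤ)
    (hF0 : F 0 = 0) (hF1 : F 1 = 1) (hF : ∀ n : ℤ, F n = F (n - 1) + F (n - 2))
    (G H : ℤ → ℝ)
    (hG : ∀ n : ℤ, G n = G (n - 1) + G (n - 2))
    (hH : ∀ n : ℤ, H n = H (n - 1) + H (n - 2))
    (r s k : ℤ) :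
    H s * G (k + r) + (-1 : ℝ) ^ (r - 1) * H (s - r) * G k =
      (F r : ℝ) * (G 0 * H (k + s - 1) + G 1 * H (k + s)) := by
  have hFR : IsGibonacci fun n => (F n : ℝ) := fun n => by beta_reduce; exact_mod_cast hF n
  exact hFR.howard_identity (by simp [hF0]) (by simp [hF1]) hG hH r s k
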